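/- Let X and Y be nonempty words over the alphabet {L, M, R} satisfying XY = ȲX. Then the word XY·(XY)‾ (the concatenation of XY with its complement) is not primitive, and the word ȲXYX̄ is not primitive. -/
import Mathlib


/-- The three-letter alphabet {L, M, R}. -/
inductive Letter : Type
  | L | M | R
deriving DecidableEq, Repr

/-- Complementation on letters: R̄ = L, L̄ = R, M̄ = M. -/
def Letter.bar : Letter → Letter
  | .L => .R
  | .M => .M
  | .R => .L

/-- Complement of a word (letterwise). -/
def comp (w : List Letter) : List Letter := w.map Letter.bar

/-- k-fold concatenation of a word with itself. -/
def npow (w : List Letter) : ℕ → List Letter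
  | 0 => []
  | n + 1 => w ++ npow w n

/-- A word is primitive if it is not a power u^l with l ≥ 2. -/
def Primitive (w : List Letter) : Prop :=
  ∀ (u : List Letter) (l : ℕ), 2 ≤ l → w ≠ npow u l

lemma myNpowLen (w : List Letter) : ∀ k, (npow w k).length = k * w.length
  | 0 => by simp [npow]
  | k+1 => by simp [npow, myNpowLen w k]; ring

lemma myNpowAdd (w : List Letter) (k l : ℕ) :
    npow w (k + l) = npow w k ++ npow w l := by
  induction k with
  | zero => simp [npow]
  | succ k ih => simp [npow, Nat.succ_add, ih]

lemma comm_npow : ∀ (n : ℕ) (u v : List Letter), u.length + v.length ≤ n →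
    u ++ v = v ++ u → ∃ w k l, u = npow w k ∧ v = npow w l := by
  intro n
  induction n with
  | zero =>
    intro u v hn _
    have hu : u = [] := by
      have := List.eq_nil_of_length_eq_zero (l := u) (by omega)
      exact this
    have hv : v = [] := List.eq_nil_of_length_eq_zero (by omega)
    exact ⟨[], 0, 0, by simp [hu, npow], by simp [hv, npow]⟩
  | succ n ih =>
    intro u v hn h
    rcases eq_or_ne u [] with rfl | hu
    · exact ⟨v, 0, 1, by simp [npow], by simp [npow]⟩
    rcases eq_or_ne v [] with rfl | hv
    · exact ⟨u, 1, 0, by simp [npow], by simp [npow]⟩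
    rcases le_total u.length v.length with hle | hle
    · have hvtake : v.take u.length = u := by
        have h' := congrArg (List.take u.length) h
        rwa [List.take_left, List.take_append_of_le_length hle, eq_comm] at h'
      have hv2 : v = u ++ v.drop u.length := by
        conv_lhs => rw [← List.take_append_drop u.length v, hvtake]
      set v' := v.drop u.length with hv'
      have hcomm : u ++ v' = v' ++ u := by
        have h2 : u ++ (u ++ v') = (u ++ v') ++ u := by rw [← hv2]; exact h
        rw [List.append_assoc] at h2
        exact List.append_cancel_left h2
      have hlen : u.length + v'.length ≤ n := by
        have h1 : 1 ≤ u.length := List.length_pos_iff.mpr hu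
        have h2 : v'.length = v.length - u.length := by simp [hv']
        omega
      obtain ⟨w, k, l, e1, e2⟩ := ih u v' hlen hcomm
      exact ⟨w, k, k + l, e1, by rw [hv2, myNpowAdd, e1, e2]⟩
    · have hutake : u.take v.length = v := by
        have h' := congrArg (List.take v.length) h
        rwa [List.take_left, List.take_append_of_le_length hle] at h'
      have hu2 : u = v ++ u.drop v.length := by
        conv_lhs => rw [← List.take_append_drop v.length u, hutake]
      set u' := u.drop v.length with hu'
      have hcomm : v ++ u' = u' ++ v := by
        have h2 : (v ++ u') ++ v = v ++ (v ++ u') := by rw [← hu2]; exact h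
        rw [List.append_assoc] at h2
        exact (List.append_cancel_left h2).symm
      have hlen : v.length + u'.length ≤ n := by
        have h1 : 1 ≤ v.length := List.length_pos_iff.mpr hv
        have h2 : u'.length = u.length - v.length := by simp [hu']
        omega
      obtain ⟨w, k, l, e1, e2⟩ := ih v u' hlen hcomm
      exact ⟨w, k + l, k, by rw [hu2, myNpowAdd, e1, e2], e1⟩

theorem stmt_3 (X Y : List Letter) (hX : X ≠ []) (hY : Y ≠ [])
    (heq : X ++ Y = comp Y ++ X) :
    ¬ Primitive ((X ++ Y) ++ comp (X ++ Y)) ∧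
    ¬ Primitive (comp Y ++ X ++ Y ++ comp X) := by
  have hbar : ∀ c, Letter.bar (Letter.bar c) = c := by intro c; cases c <;> rfl
  have hcompcomp : ∀ w : List Letter, comp (comp w) = w := by
    intro w; simp [comp, List.map_map, Function.comp_def, hbar]
  have h2' : comp X ++ comp Y = Y ++ comp X := by
    have h' := congrArg comp heq
    simp only [comp, List.map_append, List.map_map] at h'
    simpa [comp, Function.comp_def, hbar] using h'
  have h1t : ∀ t : List Letter, X ++ (Y ++ t) = comp Y ++ (X ++ t) := by
    intro t; rw [← List.append_assoc, ← List.append_assoc, heq]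
  have h2t : ∀ t : List Letter, comp X ++ (comp Y ++ t) = Y ++ (comp X ++ t) := by
    intro t; rw [← List.append_assoc, ← List.append_assoc, h2']
  set W := (X ++ Y) ++ comp (X ++ Y) with hW
  have hcompXY : comp (X ++ Y) = comp X ++ comp Y := by simp [comp]
  have e1 : W = X ++ (Y ++ (Y ++ comp X)) := by
    rw [hW, hcompXY, h2']; simp [List.append_assoc]
  have e2 : W = comp Y ++ (comp Y ++ (X ++ comp X)) := by
    rw [e1, h1t, h1t]
  have hcomm : (X ++ comp X) ++ W = W ++ (X ++ comp X) := by
    calc (X ++ comp X) ++ W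
        = X ++ (comp X ++ (comp Y ++ (comp Y ++ (X ++ comp X)))) := by
          rw [e2]; simp [List.append_assoc]
      _ = X ++ (Y ++ (comp X ++ (comp Y ++ (X ++ comp X)))) := by rw [h2t]
      _ = X ++ (Y ++ (Y ++ (comp X ++ (X ++ comp X)))) := by rw [h2t]
      _ = W ++ (X ++ comp X) := by rw [e1]; simp [List.append_assoc]
  have hlX : 1 ≤ X.length := List.length_pos_iff.mpr hX
  have hlY : 1 ≤ Y.length := List.length_pos_iff.mpr hY
  have hWlen : W.length = 2 * X.length + 2 * Y.length := by
    rw [e1]; simp [comp]; omega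
  obtain ⟨w, k, l, hu, hv⟩ :=
    comm_npow ((X ++ comp X).length + W.length) (X ++ comp X) W le_rfl hcomm
  have hulen : X.length + X.length = k * w.length := by
    have h' := congrArg List.length hu
    simpa [myNpowLen, comp] using h'
  have hvlen : W.length = l * w.length := by
    have h' := congrArg List.length hv
    simpa [myNpowLen] using h'
  have h2l : 2 ≤ l := by
    by_contra hcon
    push_neg at hcon
    have hk : 0 < k := by
      rcases Nat.eq_zero_or_pos k with rfl | hk
      · omega
      · exact hk
    have t1 : w.length ≤ k * w.length := Nat.le_mul_of_pos_left _ hk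
    have t2 : l * w.length ≤ 1 * w.length := Nat.mul_le_mul_right _ (by omega)
    rw [one_mul] at t2
    have q1 : w.length ≤ X.length + X.length := by rw [hulen]; exact t1
    have q2 : W.length ≤ w.length := by rw [hvlen]; exact t2
    omega
  have hnp : ¬ Primitive W := fun hP => hP w l h2l hv
  refine ⟨hnp, ?_⟩
  have hsame : comp Y ++ X ++ Y ++ comp X = W := by
    rw [← heq, e1]; simp [List.append_assoc]
  rw [hsame]; exact hnp
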